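/- There exist exactly two unordered partitions of the vertex set of CQ_3 into two 4-element sets each of which induces a 4-cycle; that is, there are partitions {V1, V2} and {V3, V4} of the vertex set of CQ_3 with ⟨V_i⟩ isomorphic to C_4 for i = 1, 2, 3, 4, these two partitions are distinct, and every partition of the vertex set of CQ_3 into two sets each inducing a 4-cycle equals {V1, V2} or {V3, V4}. Moreover, ⟨V_i ∩ V_j⟩ is isomorphic to P_2 (the intersection consists of exactly two adjacent vertices) for every i in {1, 2} and j in {3, 4}. -/

import Mathlib

/-!
A partition of the graph `CQ_3` into two induced 4-cycles is in particular a partition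
into two vertex sets on each of which every vertex has exactly two neighbours. Among the subsets
of the eight vertices, only the halves `x₁ = 0`, `x₁ = 1` and the halves `x₃ = 0`, `x₃ = 1` have
this property, both halves induce 4-cycles, and a half of one partition meets a half of the other
in an edge; all of this is a finite check.
-/

/-- Vertices of the 3-dimensional cubes: binary strings `x1x2x3` of length 3. -/
abbrev Vtx3 := Bool × Bool × Bool

/-- The 12 edges of the 3-dimensional crossed cube `CQ_3`. -/
def cq3EdgeList : List (Vtx3 × Vtx3) :=
  [ ((false,false,false),(false,false,true)),
    ((false,true,false),(false,true,true)),
    ((true,false,false),(true,false,true)),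
    ((true,true,false),(true,true,true)),
    ((false,false,false),(false,true,false)),
    ((false,false,true),(false,true,true)),
    ((true,false,false),(true,true,false)),
    ((true,false,true),(true,true,true)),
    ((false,false,false),(true,false,false)),
    ((false,true,false),(true,true,false)),
    ((false,false,true),(true,true,true)),
    ((false,true,true),(true,false,true)) ]

/-- The 3-dimensional crossed cube `CQ_3`. -/
def CQ3 : SimpleGraph Vtx3 where
  Adj u v := (u, v) ∈ cq3EdgeList ∨ (v, u) ∈ cq3EdgeList
  symm := ⟨fun _ _ h => Or.symm h⟩
  loopless := ⟨by
    intro x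
    revert x
    decide⟩

instance : DecidableRel CQ3.Adj :=
  fun u v => inferInstanceAs (Decidable ((u, v) ∈ cq3EdgeList ∨ (v, u) ∈ cq3EdgeList))

/-- `X` is a 4-element vertex subset of `CQ_3` inducing a 4-cycle. -/
def IndC4 (X : Finset Vtx3) : Prop :=
  X.card = 4 ∧ Nonempty (CQ3.induce (↑X) ≃g SimpleGraph.cycleGraph 4)

open Finset

namespace SimpleGraph

variable {V W : Type*}

instance decidableNonemptyIso [Fintype V] [Fintype W] [DecidableEq V] [DecidableEq W]
    (G : SimpleGraph V) (H : SimpleGraph W) [DecidableRel G.Adj] [DecidableRel H.Adj] :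
    Decidable (Nonempty (G ≃g H)) :=
  decidable_of_iff (∃ e : V ≃ W, ∀ a b, G.Adj a b ↔ H.Adj (e a) (e b))
    ⟨fun ⟨e, h⟩ => ⟨⟨e, (h _ _).symm⟩⟩, fun ⟨e⟩ => ⟨e.toEquiv, fun _ _ => e.map_rel_iff.symm⟩⟩

instance (n : ℕ) : DecidableRel (pathGraph n).Adj := fun _ _ =>
  decidable_of_iff _ pathGraph_adj.symm

theorem Iso.isRegularOfDegree {G : SimpleGraph V} {H : SimpleGraph W} [G.LocallyFinite]
    [H.LocallyFinite] {d : ℕ} (e : G ≃g H) (h : H.IsRegularOfDegree d) :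
    G.IsRegularOfDegree d :=
  fun v => (e.degree_eq v).symm.trans (h (e v))

theorem cycleGraph_isRegularOfDegree_two (n : ℕ) : (cycleGraph (n + 3)).IsRegularOfDegree 2 :=
  fun _ => cycleGraph_degree_three_le

theorem degree_induce_finset [Fintype V] [DecidableEq V] (G : SimpleGraph V)
    [DecidableRel G.Adj] (s : Finset V) (v : s) :
    (G.induce (s : Set V)).degree v = #{w ∈ s | G.Adj v w} := by
  rw [← card_neighborFinset_eq_degree, ← card_map (Function.Embedding.subtype _)]
  congr 1
  ext w
  simp [and_comm]

end SimpleGraph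

open SimpleGraph

def cq3FirstHalf (b : Bool) : Finset Vtx3 := {v | v.1 = b}

def cq3LastHalf (b : Bool) : Finset Vtx3 := {v | v.2.2 = b}

instance (X : Finset Vtx3) : Decidable (IndC4 X) := inferInstanceAs (Decidable (_ ∧ _))

theorem IndC4.card_filter_adj {X : Finset Vtx3} (h : IndC4 X) :
    ∀ v ∈ X, #{w ∈ X | CQ3.Adj v w} = 2 := fun v hv =>
  (CQ3.degree_induce_finset X ⟨v, hv⟩).symm.trans <|
    h.2.some.isRegularOfDegree (cycleGraph_isRegularOfDegree_two 1) _

set_option maxRecDepth 10000 in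
theorem cq3_halves_of_card_filter_adj :
    ∀ W : Finset Vtx3, (∀ v ∈ W, #{w ∈ W | CQ3.Adj v w} = 2) →
      (∀ v ∈ Wᶜ, #{w ∈ Wᶜ | CQ3.Adj v w} = 2) →
      ({W, Wᶜ} : Finset (Finset Vtx3)) = {cq3FirstHalf false, cq3FirstHalf true} ∨
      ({W, Wᶜ} : Finset (Finset Vtx3)) = {cq3LastHalf false, cq3LastHalf true} := by
  decide

/-- There are exactly two unordered partitions of `V(CQ_3)` into two 4-element
sets each inducing a 4-cycle, and any part of one partition meets any part of
the other in exactly two adjacent vertices (inducing `P_2`). -/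
theorem cq3_two_c4_partitions :
    ∃ A B C D : Finset Vtx3,
      (Disjoint A B ∧ A ∪ B = Finset.univ ∧ IndC4 A ∧ IndC4 B) ∧
      (Disjoint C D ∧ C ∪ D = Finset.univ ∧ IndC4 C ∧ IndC4 D) ∧
      ({A, B} : Finset (Finset Vtx3)) ≠ ({C, D} : Finset (Finset Vtx3)) ∧
      (∀ W₁ W₂ : Finset Vtx3, Disjoint W₁ W₂ → W₁ ∪ W₂ = Finset.univ →
        IndC4 W₁ → IndC4 W₂ →
        ({W₁, W₂} : Finset (Finset Vtx3)) = ({A, B} : Finset (Finset Vtx3)) ∨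
        ({W₁, W₂} : Finset (Finset Vtx3)) = ({C, D} : Finset (Finset Vtx3))) ∧
      (∀ P ∈ ({A, B} : Finset (Finset Vtx3)), ∀ Q ∈ ({C, D} : Finset (Finset Vtx3)),
        Nonempty (CQ3.induce (↑(P ∩ Q)) ≃g SimpleGraph.pathGraph 2)) := by
  refine ⟨cq3FirstHalf false, cq3FirstHalf true, cq3LastHalf false, cq3LastHalf true,
    by decide, by decide, by decide, ?_, ?_⟩
  · intro W₁ W₂ hd hu h₁ h₂
    obtain rfl : W₂ = W₁ᶜ := (IsCompl.compl_eq ⟨hd, codisjoint_iff.mpr hu⟩).symm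
    exact cq3_halves_of_card_filter_adj W₁ h₁.card_filter_adj h₂.card_filter_adj
  · simp only [mem_insert, mem_singleton]
    rintro P (rfl | rfl) Q (rfl | rfl) <;> decide
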